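/- arXiv:math-ph/0307063 — 3 statements merged into one kernel-verified Lean document; each statement's English description precedes it below -/
import Mathlib

section
/- Let (q, p, H) solve the Painlevé III Hamiltonian system with parameters v1, v2, η0, η∞ ∈ ℂ on an open set U ⊆ ℂ with 0 ∉ U, and let h(t) := t·H(t) + (2v1+1)²/8. Then for all t ∈ U: 8·(h(t) − t·h'(t)) = (4·q(t)·p(t) − 2v1 − 1)². -/
open Complex

/-- `(q, p, H)` solves the Painlevé III Hamiltonian system with parameters
`v1, v2, η0, ηinf` on an open set `U ⊆ ℂ` with `0 ∉ U`. -/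
def SolvesPIII (v1 v2 η0 ηinf : ℂ) (U : Set ℂ) (q p H : ℂ → ℂ) : Prop :=
  IsOpen U ∧ (0 : ℂ) ∉ U ∧
    DifferentiableOn ℂ q U ∧ DifferentiableOn ℂ p U ∧
    (∀ t ∈ U, t * H t =
      2 * q t ^ 2 * p t ^ 2
        - (2 * ηinf * t * q t ^ 2 + (2 * v1 + 1) * q t - 2 * η0 * t) * p t
        + ηinf * (v1 + v2) * t * q t) ∧
    (∀ t ∈ U, t * deriv q t =
      4 * q t ^ 2 * p t - 2 * ηinf * t * q t ^ 2 - (2 * v1 + 1) * q t + 2 * η0 * t) ∧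
    (∀ t ∈ U, t * deriv p t =
      -4 * q t * p t ^ 2 + 4 * ηinf * t * q t * p t + (2 * v1 + 1) * p t
        - ηinf * (v1 + v2) * t)

/-!
Write `K(t, q, p) = t·H` for the polynomial Hamiltonian. Hamilton's equations read
`t q' = ∂K/∂p`, `t p' = -∂K/∂q`, so along a solution the contributions of `q'` and `p'` to
`dK/dt` cancel and `h' = ∂K/∂t`. Since `K` is affine in `t`, `K - t ∂K/∂t` is the
`t`-free part `2q²p² - (2v1+1)qp` of `K`, and adding `(2v1+1)²/8` completes the square.
-/

namespace PainleveIII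

variable (v1 v2 η0 ηinf : ℂ)

def hamiltonian (t q p : ℂ) : ℂ :=
  2 * q ^ 2 * p ^ 2 - (2 * ηinf * t * q ^ 2 + (2 * v1 + 1) * q - 2 * η0 * t) * p
    + ηinf * (v1 + v2) * t * q

def hamiltonianDerivT (q p : ℂ) : ℂ :=
  -2 * ηinf * q ^ 2 * p + 2 * η0 * p + ηinf * (v1 + v2) * q

def hamiltonianDerivQ (t q p : ℂ) : ℂ :=
  4 * q * p ^ 2 - 4 * ηinf * t * q * p - (2 * v1 + 1) * p + ηinf * (v1 + v2) * t

def hamiltonianDerivP (t q p : ℂ) : ℂ :=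
  4 * q ^ 2 * p - 2 * ηinf * t * q ^ 2 - (2 * v1 + 1) * q + 2 * η0 * t

theorem hasDerivAt_hamiltonian_comp {q p : ℂ → ℂ} {q' p' t : ℂ}
    (hq : HasDerivAt q q' t) (hp : HasDerivAt p p' t) :
    HasDerivAt (fun s => hamiltonian v1 v2 η0 ηinf s (q s) (p s))
      (hamiltonianDerivT v1 v2 η0 ηinf (q t) (p t)
        + hamiltonianDerivQ v1 v2 ηinf t (q t) (p t) * q'
        + hamiltonianDerivP v1 η0 ηinf t (q t) (p t) * p') t := by
  have hid := hasDerivAt_id t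
  have hK : HasDerivAt (fun s => hamiltonian v1 v2 η0 ηinf s (q s) (p s)) _ t :=
    ((((hq.pow 2).const_mul 2).mul (hp.pow 2)).sub
      (((((hid.const_mul (2 * ηinf)).mul (hq.pow 2)).add (hq.const_mul (2 * v1 + 1))).sub
        (hid.const_mul (2 * η0))).mul hp)).add ((hid.const_mul (ηinf * (v1 + v2))).mul hq)
  convert hK using 1
  simp only [hamiltonianDerivT, hamiltonianDerivQ, hamiltonianDerivP, Pi.add_apply,
    Pi.sub_apply, Pi.mul_apply, Pi.pow_apply, id]
  push_cast
  ring

theorem hasDerivAt_hamiltonian_of_hamiltonian_eqs {q p : ℂ → ℂ} {q' p' t : ℂ} (ht : t ≠ 0)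
    (hq : HasDerivAt q q' t) (hp : HasDerivAt p p' t)
    (hq_eq : t * q' = hamiltonianDerivP v1 η0 ηinf t (q t) (p t))
    (hp_eq : t * p' = -hamiltonianDerivQ v1 v2 ηinf t (q t) (p t)) :
    HasDerivAt (fun s => hamiltonian v1 v2 η0 ηinf s (q s) (p s))
      (hamiltonianDerivT v1 v2 η0 ηinf (q t) (p t)) t := by
  convert hasDerivAt_hamiltonian_comp v1 v2 η0 ηinf hq hp using 1
  have hflow : t * (hamiltonianDerivQ v1 v2 ηinf t (q t) (p t) * q'
      + hamiltonianDerivP v1 η0 ηinf t (q t) (p t) * p') = 0 := by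
    linear_combination hamiltonianDerivQ v1 v2 ηinf t (q t) (p t) * hq_eq
      + hamiltonianDerivP v1 η0 ηinf t (q t) (p t) * hp_eq
  rw [add_assoc, (mul_eq_zero.mp hflow).resolve_left ht, add_zero]

theorem eight_mul_hamiltonian_sub_mul_derivT (t q p : ℂ) :
    8 * (hamiltonian v1 v2 η0 ηinf t q p + (2 * v1 + 1) ^ 2 / 8
      - t * hamiltonianDerivT v1 v2 η0 ηinf q p) = (4 * q * p - 2 * v1 - 1) ^ 2 := by
  simp only [hamiltonian, hamiltonianDerivT]
  ring

end PainleveIII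

open PainleveIII in
theorem SolvesPIII.hasDerivAt_hamiltonian {v1 v2 η0 ηinf : ℂ} {U : Set ℂ} {q p H : ℂ → ℂ}
    (hsol : SolvesPIII v1 v2 η0 ηinf U q p H) {t : ℂ} (ht : t ∈ U) :
    HasDerivAt (fun s => hamiltonian v1 v2 η0 ηinf s (q s) (p s))
      (hamiltonianDerivT v1 v2 η0 ηinf (q t) (p t)) t := by
  obtain ⟨hU, h0, hq, hp, -, hq_eq, hp_eq⟩ := hsol
  refine hasDerivAt_hamiltonian_of_hamiltonian_eqs v1 v2 η0 ηinf (ne_of_mem_of_not_mem ht h0)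
    (hq.differentiableAt (hU.mem_nhds ht)).hasDerivAt
    (hp.differentiableAt (hU.mem_nhds ht)).hasDerivAt (hq_eq t ht) ?_
  rw [hp_eq t ht, hamiltonianDerivQ]
  ring

open PainleveIII in
/-- For the auxiliary Hamiltonian `h(t) = tH(t) + (2v1+1)²/8` of Painlevé III,
`8(h − th') = (4qp − 2v1 − 1)²`. -/
theorem painleveIII_auxHamiltonian_sq (v1 v2 η0 ηinf : ℂ) (U : Set ℂ)
    (q p H h : ℂ → ℂ)
    (hsol : SolvesPIII v1 v2 η0 ηinf U q p H)
    (hdef : h = fun t => t * H t + (2 * v1 + 1) ^ 2 / 8) :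
    ∀ t ∈ U, 8 * (h t - t * deriv h t) = (4 * q t * p t - 2 * v1 - 1) ^ 2 := by
  intro t ht
  obtain ⟨hU, -, -, -, hH, -⟩ := id hsol
  have h_eventually : h =ᶠ[nhds t]
      fun s => hamiltonian v1 v2 η0 ηinf s (q s) (p s) + (2 * v1 + 1) ^ 2 / 8 := by
    filter_upwards [hU.mem_nhds ht] with s hs
    rw [hdef]
    exact congrArg (· + _) (hH s hs)
  have h_deriv : deriv h t = hamiltonianDerivT v1 v2 η0 ηinf (q t) (p t) :=
    h_eventually.deriv_eq.trans ((hsol.hasDerivAt_hamiltonian ht).add_const _).deriv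
  rw [h_deriv, h_eventually.eq_of_nhds]
  exact eight_mul_hamiltonian_sub_mul_derivT v1 v2 η0 ηinf t (q t) (p t)
end

section
/- (Change of variables relating the Painlevé III auxiliary-Hamiltonian equation to the spectrum-singularity σ-equation.) Let a ∈ ℂ, let U ⊆ ℂ be open with 0 ∉ U, and let h, G : U → ℂ be complex-differentiable functions such that for all t ∈ U: G(t)² = 2·(h(t) − t·h'(t)) and (t·h''(t))² = 2·(h − t·h')·( 4(h')² + 32·(h − t·h') − 32·a·G + 16·a² ). Define V := {r ∈ ℂ : −i·r/4 ∈ U}, σ₁(r) := 2·h(−i·r/4) − a², and w(r) := G(−i·r/4). Then for all r ∈ V: w(r)² = a² + σ₁(r) − r·σ₁'(r) and (r·σ₁''(r))² + 4·(−a² − σ₁ + r·σ₁')·( (σ₁')² − (a − w)² ) = 0. -/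
open Complex

/-! With `t = -i r / 4`, so that `r = 4 i t`, the chain rule gives `σ₁' = -(i/2) h'(t)` and
`σ₁'' = -h''(t) / 8`, while `a² + σ₁ - r σ₁' = 2(h - t h') = G²`. Substituting into the
σ-equation, the auxiliary-Hamiltonian equation cancels everything except a multiple of
`G² - 2(h - t h')`. -/

section
variable {𝕜 : Type*} [NontriviallyNormedField 𝕜]

theorem deriv_const_mul_comp_mul_left_sub (f : 𝕜 → 𝕜) (c k d : 𝕜) :
    deriv (fun r => c * f (k * r) - d) = fun r => c * k * deriv f (k * r) := by
  funext r
  rw [deriv_sub_const, deriv_const_mul_field, deriv_comp_mul_left, smul_eq_mul, mul_assoc]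

theorem deriv_deriv_const_mul_comp_mul_left_sub (f : 𝕜 → 𝕜) (c k d : 𝕜) :
    deriv (deriv fun r => c * f (k * r) - d) =
      fun r => c * k ^ 2 * deriv (deriv f) (k * r) := by
  funext r
  rw [deriv_const_mul_comp_mul_left_sub, deriv_const_mul_field, deriv_comp_mul_left, smul_eq_mul]
  ring

end

/-- `h₀, h₁, h₂, g` stand for `h, h', h'', G` at `t = -i r / 4`. -/
theorem sigmaForm_of_auxHamiltonian {a r h₀ h₁ h₂ g : ℂ}
    (hg : g ^ 2 = 2 * (h₀ - -I / 4 * r * h₁))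
    (hode : (-I / 4 * r * h₂) ^ 2 = 2 * (h₀ - -I / 4 * r * h₁) *
      (4 * h₁ ^ 2 + 32 * (h₀ - -I / 4 * r * h₁) - 32 * a * g + 16 * a ^ 2)) :
    g ^ 2 = a ^ 2 + (2 * h₀ - a ^ 2) - r * (2 * (-I / 4) * h₁) ∧
      (r * (2 * (-I / 4) ^ 2 * h₂)) ^ 2 +
        4 * (-a ^ 2 - (2 * h₀ - a ^ 2) + r * (2 * (-I / 4) * h₁)) *
          ((2 * (-I / 4) * h₁) ^ 2 - (a - g) ^ 2) = 0 := by
  refine ⟨by linear_combination hg, ?_⟩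
  have hI : I ^ 2 = -1 := I_sq
  linear_combination (-1 / 4 : ℂ) * hode + 8 * (h₀ - -I / 4 * r * h₁) * hg +
    (r ^ 2 * I ^ 2 * h₂ ^ 2 / 64 - r * I * h₁ ^ 3 / 2 - 2 * h₀ * h₁ ^ 2) * hI

theorem auxHamiltonian_to_spectrumSingularity_sigma_general (a : ℂ) (U : Set ℂ)
    (h G : ℂ → ℂ)
    (hGsq : ∀ t ∈ U, G t ^ 2 = 2 * (h t - t * deriv h t))
    (hode : ∀ t ∈ U,
      (t * deriv (deriv h) t) ^ 2 =
        2 * (h t - t * deriv h t) *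
          (4 * (deriv h t) ^ 2 + 32 * (h t - t * deriv h t)
            - 32 * a * G t + 16 * a ^ 2))
    (V : Set ℂ) (hV : V = {r : ℂ | -Complex.I * r / 4 ∈ U})
    (σ₁ w : ℂ → ℂ)
    (hσ : σ₁ = fun r => 2 * h (-Complex.I * r / 4) - a ^ 2)
    (hw : w = fun r => G (-Complex.I * r / 4)) :
    ∀ r ∈ V,
      w r ^ 2 = a ^ 2 + σ₁ r - r * deriv σ₁ r ∧
      (r * deriv (deriv σ₁) r) ^ 2 +
        4 * (-a ^ 2 - σ₁ r + r * deriv σ₁ r) *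
          ((deriv σ₁ r) ^ 2 - (a - w r) ^ 2) = 0 := by
  subst hV hw
  simp_rw [mul_div_right_comm] at hσ ⊢
  subst hσ
  rintro r (hr : -I / 4 * r ∈ U)
  rw [deriv_deriv_const_mul_comp_mul_left_sub, deriv_const_mul_comp_mul_left_sub]
  exact sigmaForm_of_auxHamiltonian (hGsq _ hr) (hode _ hr)

/-- Change of variables relating the Painlevé III auxiliary-Hamiltonian
equation (with `η0 = ηinf = 1`, `v1 = −a − 1/2`, `v2 = a + 1/2`, the square root
`√(2(h − th'))` realised by `G`) to the spectrum-singularity σ-equation, with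
the square root `√(a² + σ₁ − rσ₁')` realised by `w`. -/
theorem auxHamiltonian_to_spectrumSingularity_sigma (a : ℂ) (U : Set ℂ)
    (hU : IsOpen U) (h0 : (0 : ℂ) ∉ U)
    (h G : ℂ → ℂ)
    (hdiff : DifferentiableOn ℂ h U)
    (hGdiff : DifferentiableOn ℂ G U)
    (hGsq : ∀ t ∈ U, G t ^ 2 = 2 * (h t - t * deriv h t))
    (hode : ∀ t ∈ U,
      (t * deriv (deriv h) t) ^ 2 =
        2 * (h t - t * deriv h t) *
          (4 * (deriv h t) ^ 2 + 32 * (h t - t * deriv h t)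
            - 32 * a * G t + 16 * a ^ 2))
    (V : Set ℂ) (hV : V = {r : ℂ | -Complex.I * r / 4 ∈ U})
    (σ₁ w : ℂ → ℂ)
    (hσ : σ₁ = fun r => 2 * h (-Complex.I * r / 4) - a ^ 2)
    (hw : w = fun r => G (-Complex.I * r / 4)) :
    ∀ r ∈ V,
      w r ^ 2 = a ^ 2 + σ₁ r - r * deriv σ₁ r ∧
      (r * deriv (deriv σ₁) r) ^ 2 +
        4 * (-a ^ 2 - σ₁ r + r * deriv σ₁ r) *
          ((deriv σ₁ r) ^ 2 - (a - w r) ^ 2) = 0 :=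
  auxHamiltonian_to_spectrumSingularity_sigma_general a U h G hGsq hode V hV σ₁ w hσ hw
end

section
/- (The spectrum-singularity σ-function is twice the Painlevé III Hamiltonian.) Let a ∈ ℂ and ε ∈ {1, −1}. Let (q, p, H) solve the Painlevé III Hamiltonian system with parameters v1 = −ε·a − 1/2, v2 = ε·a + 1/2, η0 = η∞ = 1 on an open set U ⊆ ℂ with 0 ∉ U. Define V := {r ∈ ℂ : −i·r/4 ∈ U} and σ₁(r) := 2·( t·H(t) ) evaluated at t = −i·r/4, i.e. σ₁(r) := 2·(−i·r/4)·H(−i·r/4). Then there exists a function w : V → ℂ such that for all r ∈ V: w(r)² = a² + σ₁(r) − r·σ₁'(r) and (r·σ₁''(r))² + 4·(−a² − σ₁ + r·σ₁')·( (σ₁')² − (a − w)² ) = 0; that is, σ₁ satisfies the second-order second-degree equation (r·σ₁'')² + 4·[−a² − σ₁ + r·σ₁']·{(σ₁')² − [a − √(a² + σ₁ − r·σ₁')]²} = 0 characterising the bulk-scaled spectrum-singularity gap probability. -/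
/-!
Since `d(tH)/dt = ∂(tH)/∂t` along the flow, with `t = -ir/4` one gets `σ₁' = ip(q² - 1)`, and
differentiating once more with Hamilton's equations, `rσ₁'' = 2iεp(q² + 1)(a + 2εqp)`. As
`σ₁ - rσ₁' = 4qp(qp + εa)`, the function `w = a + 2εqp` is a square root of `a² + σ₁ - rσ₁'`, and
the equation reduces to `(1 + q²)² = (1 - q²)² + 4q²`.
-/

open Complex

open Filter Topology

namespace SolvesPIII

variable {v1 v2 η0 ηinf : ℂ} {U : Set ℂ} {q p H : ℂ → ℂ} {t : ℂ}

theorem ne_zero_of_mem (hsol : SolvesPIII v1 v2 η0 ηinf U q p H) (ht : t ∈ U) : t ≠ 0 :=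
  fun h => hsol.2.1 (h ▸ ht)

theorem hasDerivAt_q (hsol : SolvesPIII v1 v2 η0 ηinf U q p H) (ht : t ∈ U) :
    HasDerivAt q (deriv q t) t :=
  (hsol.2.2.1.differentiableAt (hsol.1.mem_nhds ht)).hasDerivAt

theorem hasDerivAt_p (hsol : SolvesPIII v1 v2 η0 ηinf U q p H) (ht : t ∈ U) :
    HasDerivAt p (deriv p t) t :=
  (hsol.2.2.2.1.differentiableAt (hsol.1.mem_nhds ht)).hasDerivAt

/-- Along the flow the `q'`- and `p'`-terms of `d(tH)/dt` cancel by Hamilton's equations. -/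
theorem hasDerivAt_mul_hamiltonian (hsol : SolvesPIII v1 v2 η0 ηinf U q p H) (ht : t ∈ U) :
    HasDerivAt (fun t => t * H t)
      (2 * η0 * p t - 2 * ηinf * q t ^ 2 * p t + ηinf * (v1 + v2) * q t) t := by
  have hq := hsol.hasDerivAt_q ht
  have hp := hsol.hasDerivAt_p ht
  have ht0 := hsol.ne_zero_of_mem ht
  obtain ⟨hU, -, -, -, hH, hq', hp'⟩ := hsol
  have hid := hasDerivAt_id t
  have hF := (((hq.pow 2).const_mul 2).mul (hp.pow 2)).sub
    ((((hid.const_mul (2 * ηinf)).mul (hq.pow 2)).add (hq.const_mul (2 * v1 + 1))).sub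
      (hid.const_mul (2 * η0)) |>.mul hp) |>.add ((hid.const_mul (ηinf * (v1 + v2))).mul hq)
  have hev : (fun t => t * H t) =ᶠ[𝓝 t] fun t =>
      2 * q t ^ 2 * p t ^ 2 - (2 * ηinf * t * q t ^ 2 + (2 * v1 + 1) * q t - 2 * η0 * t) * p t
        + ηinf * (v1 + v2) * t * q t :=
    eventually_of_mem (hU.mem_nhds ht) hH
  refine (hF.congr_of_eventuallyEq hev).congr_deriv ?_
  apply mul_left_cancel₀ ht0
  simp only [id, Pi.pow_apply, Pi.mul_apply, Pi.add_apply, Pi.sub_apply]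
  linear_combination
    -(-4 * q t * p t ^ 2 + 4 * ηinf * t * q t * p t + (2 * v1 + 1) * p t - ηinf * (v1 + v2) * t)
      * hq' t ht
    + (4 * q t ^ 2 * p t - 2 * ηinf * t * q t ^ 2 - (2 * v1 + 1) * q t + 2 * η0 * t) * hp' t ht

variable {κ : ℂ}

theorem mul_hamiltonian_eq (hsol : SolvesPIII (-κ - 1 / 2) (κ + 1 / 2) 1 1 U q p H)
    (ht : t ∈ U) : t * H t = 2 * q t * p t * (q t * p t + κ) + t * (2 * p t * (1 - q t ^ 2)) := by
  obtain ⟨-, -, -, -, hH, -, -⟩ := hsol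
  linear_combination hH t ht

theorem deriv_mul_hamiltonian_eventuallyEq
    (hsol : SolvesPIII (-κ - 1 / 2) (κ + 1 / 2) 1 1 U q p H) (ht : t ∈ U) :
    deriv (fun t => t * H t) =ᶠ[𝓝 t] fun t => 2 * p t * (1 - q t ^ 2) := by
  filter_upwards [hsol.1.mem_nhds ht] with s hs
  exact (hsol.hasDerivAt_mul_hamiltonian hs).deriv.trans (by ring)

theorem mul_deriv_deriv_mul_hamiltonian
    (hsol : SolvesPIII (-κ - 1 / 2) (κ + 1 / 2) 1 1 U q p H) (ht : t ∈ U) :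
    t * deriv (deriv fun t => t * H t) t = -4 * p t * (1 + q t ^ 2) * (κ + 2 * q t * p t) := by
  have hK : HasDerivAt (fun t => 2 * p t * (1 - q t ^ 2)) _ t :=
    ((hsol.hasDerivAt_p ht).const_mul 2).mul (((hsol.hasDerivAt_q ht).pow 2).const_sub 1)
  rw [(hsol.deriv_mul_hamiltonian_eventuallyEq ht).deriv_eq, hK.deriv]
  obtain ⟨-, -, -, -, -, hq', hp'⟩ := hsol
  linear_combination 2 * (1 - q t ^ 2) * hp' t ht - 4 * q t * p t * hq' t ht

end SolvesPIII

section Scaling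

variable {𝕜 : Type*} [NontriviallyNormedField 𝕜]

theorem deriv_const_mul_comp_mul_left (k c : 𝕜) (f : 𝕜 → 𝕜) :
    deriv (fun x => k * f (c * x)) = fun x => k * c * deriv f (c * x) := by
  rw [deriv_const_mul_field']
  funext x
  rw [deriv_comp_mul_left c f, smul_eq_mul, mul_assoc]

theorem deriv_deriv_const_mul_comp_mul_left (k c : 𝕜) (f : 𝕜 → 𝕜) :
    deriv (deriv fun x => k * f (c * x)) = fun x => k * c ^ 2 * deriv (deriv f) (c * x) := by
  rw [deriv_const_mul_comp_mul_left, deriv_const_mul_comp_mul_left]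
  funext x
  ring

end Scaling

/-- The spectrum-singularity σ-function is twice the Painlevé III Hamiltonian:
for a solution of the Painlevé III Hamiltonian system with parameters
`v1 = −εa − 1/2`, `v2 = εa + 1/2`, `η0 = ηinf = 1`, the function
`σ₁(r) = 2tH(t)` at `t = −ir/4` satisfies the second-order second-degree
equation characterising the bulk-scaled spectrum-singularity gap probability,
with the square root `√(a² + σ₁ − rσ₁')` realised by a function `w`. -/
theorem spectrumSingularity_sigma_is_PIII_hamiltonian (a ε : ℂ)
    (hε : ε = 1 ∨ ε = -1) (U : Set ℂ) (q p H : ℂ → ℂ)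
    (hsol : SolvesPIII (-ε * a - 1 / 2) (ε * a + 1 / 2) 1 1 U q p H)
    (V : Set ℂ) (hV : V = {r : ℂ | -Complex.I * r / 4 ∈ U})
    (σ₁ : ℂ → ℂ)
    (hσ : σ₁ = fun r => 2 * (-Complex.I * r / 4) * H (-Complex.I * r / 4)) :
    ∃ w : ℂ → ℂ,
      ∀ r ∈ V,
        w r ^ 2 = a ^ 2 + σ₁ r - r * deriv σ₁ r ∧
        (r * deriv (deriv σ₁) r) ^ 2 +
          4 * (-a ^ 2 - σ₁ r + r * deriv σ₁ r) *
            ((deriv σ₁ r) ^ 2 - (a - w r) ^ 2) = 0 := by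
  rw [show -ε * a - 1 / 2 = -(ε * a) - 1 / 2 by ring] at hsol
  obtain ⟨c, hc⟩ : ∃ c : ℂ, c = -I / 4 := ⟨_, rfl⟩
  have hc2 : c ^ 2 = -1 / 16 := by rw [hc, div_pow, neg_sq, I_sq]; norm_num
  have hσc : σ₁ = fun r => 2 * (fun t => t * H t) (c * r) := by
    rw [hσ]; funext r; rw [show -I * r / 4 = c * r by rw [hc]; ring]; ring
  have hσ' := deriv_const_mul_comp_mul_left 2 c fun t => t * H t
  have hσ'' := deriv_deriv_const_mul_comp_mul_left 2 c fun t => t * H t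
  rw [← hσc] at hσ' hσ''
  refine ⟨fun r => a + 2 * ε * q (c * r) * p (c * r), fun r hr => ?_⟩
  have ht : c * r ∈ U := by
    subst hV; rw [show c * r = -I * r / 4 by rw [hc]; ring]; exact hr
  set x := q (c * r)
  set y := p (c * r)
  have hK := (hsol.deriv_mul_hamiltonian_eventuallyEq ht).eq_of_nhds
  have hσr : σ₁ r = 4 * x * y * (x * y + ε * a) + r * deriv σ₁ r := by
    rw [hσ', hσc]
    linear_combination 2 * hsol.mul_hamiltonian_eq ht - 2 * c * r * hK
  have hσ'sq : deriv σ₁ r ^ 2 = -(y ^ 2 * (1 - x ^ 2) ^ 2) := by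
    simp only [hσ', hK]
    linear_combination 16 * y ^ 2 * (1 - x ^ 2) ^ 2 * hc2
  have hσ''sq : (r * deriv (deriv σ₁) r) ^ 2 =
      -(4 * y ^ 2 * (1 + x ^ 2) ^ 2 * (ε * a + 2 * x * y) ^ 2) := by
    have hσ''r :
        r * deriv (deriv σ₁) r = 2 * c * (-4 * y * (1 + x ^ 2) * (ε * a + 2 * x * y)) := by
      rw [hσ'']
      linear_combination 2 * c * hsol.mul_deriv_deriv_mul_hamiltonian ht
    rw [hσ''r]
    linear_combination 64 * y ^ 2 * (1 + x ^ 2) ^ 2 * (ε * a + 2 * x * y) ^ 2 * hc2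
  rw [hσ''sq, hσ'sq, hσr]
  constructor <;> rcases hε with rfl | rfl <;> ring
end
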